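/- For transport matrices M and M', one has M ≤_rk M' if and only if M ≤_mv M'. -/

import Mathlib

open Finset

namespace TwoFlagsLine

/-- Rank numbers `r_{ij}(M) = Σ_{k ≤ i, l ≤ j} m_{kl}` (1-based; zero if `i = 0` or `j = 0`). -/
def rk (m : ℕ → ℕ → ℕ) (i j : ℕ) : ℕ :=
  ∑ k ∈ Finset.Icc 1 i, ∑ l ∈ Finset.Icc 1 j, m k l

/-- `b` is a composition of `n` with `q` parts `b 1, …, b q`. -/
def IsComposition (n q : ℕ) (b : ℕ → ℕ) : Prop :=
  (∀ i ∈ Finset.Icc 1 q, 0 < b i) ∧ ∑ i ∈ Finset.Icc 1 q, b i = n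

/-- `m` is a `q × r` transport matrix for the compositions `b`, `c`:
entries live on `[1,q] × [1,r]`, row sums are `b i`, column sums are `c j`. -/
def IsTransport (q r : ℕ) (b c : ℕ → ℕ) (m : ℕ → ℕ → ℕ) : Prop :=
  (∀ i j : ℕ, i ∉ Finset.Icc 1 q ∨ j ∉ Finset.Icc 1 r → m i j = 0) ∧
  (∀ i ∈ Finset.Icc 1 q, ∑ j ∈ Finset.Icc 1 r, m i j = b i) ∧
  (∀ j ∈ Finset.Icc 1 r, ∑ i ∈ Finset.Icc 1 q, m i j = c j)

/-- The matrix `M - E_{i0 j0} - E_{i1 j1} + E_{i0 j1} + E_{i1 j0}`. -/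
def moveMat (m : ℕ → ℕ → ℕ) (i0 j0 i1 j1 : ℕ) : ℕ → ℕ → ℕ :=
  fun i j =>
    if (i, j) = (i0, j0) ∨ (i, j) = (i1, j1) then m i j - 1
    else if (i, j) = (i0, j1) ∨ (i, j) = (i1, j0) then m i j + 1
    else m i j

/-- The simple move `M →_R M'` at the rectangle `R = [i0,i1] × [j0,j1]`. -/
def IsSimpleMoveAt (m m' : ℕ → ℕ → ℕ) (i0 j0 i1 j1 : ℕ) : Prop :=
  i0 < i1 ∧ j0 < j1 ∧ 0 < m i0 j0 ∧ 0 < m i1 j1 ∧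
  (∀ i j : ℕ, i0 ≤ i → i ≤ i1 → j0 ≤ j → j ≤ j1 →
    (i, j) ≠ (i0, j0) → (i, j) ≠ (i1, j1) → (i, j) ≠ (i0, j1) → (i, j) ≠ (i1, j0) →
    m i j = 0) ∧
  m' = moveMat m i0 j0 i1 j1

/-- Rank order `M ≤rk M'` : `r_{ij}(M) ≥ r_{ij}(M')` for all `(i,j) ∈ [0,q] × [0,r]`. -/
def RkLE (q r : ℕ) (m m' : ℕ → ℕ → ℕ) : Prop :=
  ∀ i ≤ q, ∀ j ≤ r, rk m' i j ≤ rk m i j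

/-- A single simple move at some rectangle inside the matrix. -/
def MoveRel (q r : ℕ) (m m' : ℕ → ℕ → ℕ) : Prop :=
  ∃ i0 j0 i1 j1 : ℕ, 1 ≤ i0 ∧ i1 ≤ q ∧ 1 ≤ j0 ∧ j1 ≤ r ∧
    IsSimpleMoveAt m m' i0 j0 i1 j1

/-- Move order: reflexive–transitive closure of simple moves. -/
def MoveLE (q r : ℕ) (m m' : ℕ → ℕ → ℕ) : Prop :=
  Relation.ReflTransGen (MoveRel q r) m m'

/-- `(i,j) ≤ Δ` : some element of `Δ` lies weakly southeast of `p`. -/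
def Below (p : ℕ × ℕ) (Δ : Finset (ℕ × ℕ)) : Prop := ∃ p' ∈ Δ, p ≤ p'

/-- `[S]` : the set of `≤`-maximal elements of `S`. -/
def maxl (S : Finset (ℕ × ℕ)) : Finset (ℕ × ℕ) :=
  S.filter fun p => ∀ p' ∈ S, p ≤ p' → p = p'

/-- `Δ` is a decoration of the matrix `m`: a nonempty set of positions in `[1,q] × [1,r]`
with positive entries, proceeding strictly from northeast to southwest. -/
def IsDecoration (q r : ℕ) (m : ℕ → ℕ → ℕ) (Δ : Finset (ℕ × ℕ)) : Prop :=
  Δ.Nonempty ∧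
  (∀ p ∈ Δ, 1 ≤ p.1 ∧ p.1 ≤ q ∧ 1 ≤ p.2 ∧ p.2 ≤ r ∧ 0 < m p.1 p.2) ∧
  (∀ p ∈ Δ, ∀ p' ∈ Δ, p ≠ p' → (p.1 < p'.1 ∧ p'.2 < p.2) ∨ (p'.1 < p.1 ∧ p.2 < p'.2))

/-- `δ_{ij}(Δ) = 1` if every `(k,l) ∈ Δ` has `k ≤ i` or `l ≤ j`, else `0`. -/
def deltaNum (Δ : Finset (ℕ × ℕ)) (i j : ℕ) : ℕ :=
  if ∀ p ∈ Δ, p.1 ≤ i ∨ p.2 ≤ j then 1 else 0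

/-- Decorated rank numbers `r̄_{ij}(M,Δ) = r_{ij}(M) + δ_{ij}(Δ)`. -/
def rkBar (m : ℕ → ℕ → ℕ) (Δ : Finset (ℕ × ℕ)) (i j : ℕ) : ℕ :=
  rk m i j + deltaNum Δ i j

/-- Decorated rank order `(M,Δ) ≤rk (M',Δ')`. -/
def DecRkLE (q r : ℕ) (m : ℕ → ℕ → ℕ) (Δ : Finset (ℕ × ℕ))
    (m' : ℕ → ℕ → ℕ) (Δ' : Finset (ℕ × ℕ)) : Prop :=
  ∀ i ≤ q, ∀ j ≤ r, rk m' i j ≤ rk m i j ∧ rkBar m' Δ' i j ≤ rkBar m Δ i j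

/-- Simple move (i). -/
def MoveI (m : ℕ → ℕ → ℕ) (Δ : Finset (ℕ × ℕ))
    (m' : ℕ → ℕ → ℕ) (Δ' : Finset (ℕ × ℕ)) : Prop :=
  ∃ i1 j1 : ℕ, ¬ Below (i1, j1) Δ ∧ 0 < m i1 j1 ∧
    (∀ i j : ℕ, ((i, j) : ℕ × ℕ) < (i1, j1) → ¬ Below (i, j) Δ → m i j = 0) ∧
    m' = m ∧ Δ' = maxl (Δ ∪ {(i1, j1)})

/-- Simple move (ii). -/
def MoveII (m : ℕ → ℕ → ℕ) (Δ : Finset (ℕ × ℕ))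
    (m' : ℕ → ℕ → ℕ) (Δ' : Finset (ℕ × ℕ)) : Prop :=
  ∃ i0 j0 i1 j1 : ℕ, i0 < i1 ∧ j0 < j1 ∧ 0 < m i0 j0 ∧ 0 < m i1 j1 ∧
    (∀ i j : ℕ, ((i0, j0) : ℕ × ℕ) < (i, j) → ((i, j) : ℕ × ℕ) < (i1, j1) →
      (i, j) ≠ (i0, j1) → (i, j) ≠ (i1, j0) → m i j = 0) ∧
    (i1, j1) ∉ Δ ∧ ¬((i0, j1) ∈ Δ ∧ (i1, j0) ∈ Δ) ∧
    ((i0, j0) ∉ Δ ∨ 1 < m i0 j0) ∧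
    m' = moveMat m i0 j0 i1 j1 ∧ Δ' = Δ

/-- Simple move (iii)(a). -/
def MoveIIIa (m : ℕ → ℕ → ℕ) (Δ : Finset (ℕ × ℕ))
    (m' : ℕ → ℕ → ℕ) (Δ' : Finset (ℕ × ℕ)) : Prop :=
  ∃ i0 j0 i1 j1 : ℕ, i0 < i1 ∧ j0 < j1 ∧ (i0, j0) ∈ Δ ∧ m i0 j0 = 1 ∧ 0 < m i1 j1 ∧
    (∀ i j : ℕ, ((i0, j0) : ℕ × ℕ) < (i, j) → ((i, j) : ℕ × ℕ) < (i1, j1) →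
      (i, j) ≠ (i1, j0) → m i j = 0) ∧
    (∀ i j : ℕ, ((i, j) : ℕ × ℕ) ≤ (i0, j1) → ¬ Below (i, j) Δ → m i j = 0) ∧
    m' = moveMat m i0 j0 i1 j1 ∧ Δ' = maxl (Δ ∪ {(i0, j1)})

/-- Simple move (iii)(b). -/
def MoveIIIb (m : ℕ → ℕ → ℕ) (Δ : Finset (ℕ × ℕ))
    (m' : ℕ → ℕ → ℕ) (Δ' : Finset (ℕ × ℕ)) : Prop :=
  ∃ i0 j0 i1 j1 : ℕ, i0 < i1 ∧ j0 < j1 ∧ (i0, j0) ∈ Δ ∧ m i0 j0 = 1 ∧ 0 < m i1 j1 ∧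
    (∀ i j : ℕ, ((i0, j0) : ℕ × ℕ) < (i, j) → ((i, j) : ℕ × ℕ) < (i1, j1) →
      (i, j) ≠ (i0, j1) → m i j = 0) ∧
    (∀ i j : ℕ, ((i, j) : ℕ × ℕ) ≤ (i1, j0) → ¬ Below (i, j) Δ → m i j = 0) ∧
    m' = moveMat m i0 j0 i1 j1 ∧ Δ' = maxl (Δ ∪ {(i1, j0)})

/-- Simple move (iv)(a). -/
def MoveIVa (m : ℕ → ℕ → ℕ) (Δ : Finset (ℕ × ℕ))
    (m' : ℕ → ℕ → ℕ) (Δ' : Finset (ℕ × ℕ)) : Prop :=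
  ∃ i0 i2 i1 j2 j0 j1 : ℕ, i0 < i2 ∧ i2 < i1 ∧ j2 < j0 ∧ j0 < j1 ∧
    (i0, j0) ∈ Δ ∧ (i2, j2) ∈ Δ ∧ m i0 j0 = 1 ∧ m i2 j2 = 1 ∧ 0 < m i1 j1 ∧
    (∀ i j : ℕ, ((i0, j2) : ℕ × ℕ) < (i, j) → ((i, j) : ℕ × ℕ) < (i1, j1) →
      ¬ Below (i, j) Δ → (i, j) ≠ (i0, j1) → (i, j) ≠ (i1, j2) → m i j = 0) ∧
    m' = (fun i j =>
      if (i, j) = (i0, j0) ∨ (i, j) = (i1, j1) ∨ (i, j) = (i2, j2) then m i j - 1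
      else if (i, j) = (i1, j2) ∨ (i, j) = (i2, j0) ∨ (i, j) = (i0, j1) then m i j + 1
      else m i j) ∧
    Δ' = maxl (Δ ∪ {(i2, j0)})

/-- Simple move (iv)(b). -/
def MoveIVb (m : ℕ → ℕ → ℕ) (Δ : Finset (ℕ × ℕ))
    (m' : ℕ → ℕ → ℕ) (Δ' : Finset (ℕ × ℕ)) : Prop :=
  ∃ i0 i2 i1 j0 j1 : ℕ, i0 < i2 ∧ i2 < i1 ∧ j0 < j1 ∧
    0 < m i0 j0 ∧ 0 < m i1 j1 ∧ (i2, j0) ∈ Δ ∧ m i2 j0 = 1 ∧ ¬ Below (i0, j1) Δ ∧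
    (∀ i j : ℕ, ((i0, j0) : ℕ × ℕ) < (i, j) → ((i, j) : ℕ × ℕ) < (i1, j1) →
      (i, j) ≠ (i0, j1) → (i, j) ≠ (i1, j0) → (i, j) ≠ (i2, j0) → m i j = 0) ∧
    m' = moveMat m i0 j0 i1 j1 ∧ Δ' = Δ

/-- Simple move (iv)(c). -/
def MoveIVc (m : ℕ → ℕ → ℕ) (Δ : Finset (ℕ × ℕ))
    (m' : ℕ → ℕ → ℕ) (Δ' : Finset (ℕ × ℕ)) : Prop :=
  ∃ i0 i1 j0 j2 j1 : ℕ, i0 < i1 ∧ j0 < j2 ∧ j2 < j1 ∧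
    0 < m i0 j0 ∧ 0 < m i1 j1 ∧ (i0, j2) ∈ Δ ∧ m i0 j2 = 1 ∧ ¬ Below (i1, j0) Δ ∧
    (∀ i j : ℕ, ((i0, j0) : ℕ × ℕ) < (i, j) → ((i, j) : ℕ × ℕ) < (i1, j1) →
      (i, j) ≠ (i0, j1) → (i, j) ≠ (i1, j0) → (i, j) ≠ (i0, j2) → m i j = 0) ∧
    m' = moveMat m i0 j0 i1 j1 ∧ Δ' = Δ

/-- Simple move (v), with circled positions `(I 1, J 1), …, (I t, J t)` and
`(i0, j0) = (I 0, J 0)`. -/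
def MoveV (m : ℕ → ℕ → ℕ) (Δ : Finset (ℕ × ℕ))
    (m' : ℕ → ℕ → ℕ) (Δ' : Finset (ℕ × ℕ)) : Prop :=
  ∃ (t : ℕ) (I J : ℕ → ℕ), 1 ≤ t ∧
    (∀ s : ℕ, 1 ≤ s → s ≤ t → I (s - 1) < I s) ∧
    (∀ s : ℕ, 1 ≤ s → s < t → J (s + 1) < J s) ∧
    J 0 < J t ∧
    (∀ s : ℕ, 1 ≤ s → s ≤ t → (I s, J s) ∈ Δ) ∧
    0 < m (I 0) (J 0) ∧
    (∀ i j s : ℕ, 1 ≤ s → s ≤ t →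
      ((I 0, J 0) : ℕ × ℕ) < (i, j) → i ≤ I s - 1 → j ≤ J s - 1 → m i j = 0) ∧
    m' = (fun i j =>
      if (i, j) = (I 0, J 1) ∨ (i, j) = (I t, J 0) then m i j + 1
      else if (i, j) ∈ (Finset.range (t + 1)).image (fun s => (I s, J s)) then m i j - 1
      else m i j) ∧
    Δ' = (Δ \ (Finset.range (t + 1)).image (fun s => (I s, J s))) ∪ {(I 0, J 1), (I t, J 0)}

/-- One of the simple moves (i)–(v) on decorated matrices. -/
def MoveRelDec (m : ℕ → ℕ → ℕ) (Δ : Finset (ℕ × ℕ))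
    (m' : ℕ → ℕ → ℕ) (Δ' : Finset (ℕ × ℕ)) : Prop :=
  MoveI m Δ m' Δ' ∨ MoveII m Δ m' Δ' ∨ MoveIIIa m Δ m' Δ' ∨ MoveIIIb m Δ m' Δ' ∨
  MoveIVa m Δ m' Δ' ∨ MoveIVb m Δ m' Δ' ∨ MoveIVc m Δ m' Δ' ∨ MoveV m Δ m' Δ'

/-- Decorated move order: reflexive–transitive closure of the simple moves (i)–(v). -/
def DecMoveLE (m : ℕ → ℕ → ℕ) (Δ : Finset (ℕ × ℕ))
    (m' : ℕ → ℕ → ℕ) (Δ' : Finset (ℕ × ℕ)) : Prop :=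
  Relation.ReflTransGen
    (fun x y : (ℕ → ℕ → ℕ) × Finset (ℕ × ℕ) => MoveRelDec x.1 x.2 y.1 y.2) (m, Δ) (m', Δ')

/-!
A simple move at `[i0,i1] × [j0,j1]` lowers by one exactly the rank numbers `r_ij` with
`i0 ≤ i < i1` and `j0 ≤ j < j1`, so `M →_R M'` implies `M ≤rk M'`.

Conversely let `M ≤rk M'` with `M ≠ M'`. Transport matrices with the same margins have the same
rank numbers on the last row and column. Starting from the lexicographically first `(i0, j0)` with
`r(M) > r(M')`, one finds `(i1, j1)` with `m_{i1 j1} > 0` and `r(M) > r(M')` on all of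
`[i0,i1) × [j0,j1)`, and `m_{i0 j0} > 0` as well. Cutting this rectangle at a nonzero non-corner
entry gives a smaller one of the same kind, so there is one without such entries: a simple move
`M → M''` with `M'' ≤rk M'` and smaller `Σ r_ij`. Induction on `Σ r_ij` concludes.
-/

section RankNumbers

variable (m : ℕ → ℕ → ℕ)

@[simp] lemma rk_zero_left (j : ℕ) : rk m 0 j = 0 := by simp [rk]

@[simp] lemma rk_zero_right (i : ℕ) : rk m i 0 = 0 := by simp [rk]

lemma rk_succ_left (i j : ℕ) : rk m (i + 1) j = rk m i j + ∑ l ∈ Icc 1 j, m (i + 1) l :=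
  sum_Icc_succ_top (Nat.le_add_left 1 i) _

lemma rk_succ_right (i j : ℕ) : rk m i (j + 1) = rk m i j + ∑ k ∈ Icc 1 i, m k (j + 1) := by
  simp only [rk, sum_Icc_succ_top (Nat.le_add_left 1 j), sum_add_distrib]

lemma rk_succ_succ (i j : ℕ) :
    rk m (i + 1) (j + 1) + rk m i j = rk m i (j + 1) + rk m (i + 1) j + m (i + 1) (j + 1) := by
  rw [rk_succ_left, rk_succ_left, sum_Icc_succ_top (Nat.le_add_left 1 j)]
  ring

lemma rk_eq_sum_Ioc (i j : ℕ) : rk m i j = ∑ k ∈ Ioc 0 i, ∑ l ∈ Ioc 0 j, m k l := by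
  simp only [rk, ← Finset.Icc_add_one_left_eq_Ioc, zero_add]

lemma rk_add_rk_eq {i' i j' j : ℕ} (hi : i' ≤ i) (hj : j' ≤ j) :
    rk m i j + rk m i' j' =
      rk m i' j + rk m i j' + ∑ k ∈ Ioc i' i, ∑ l ∈ Ioc j' j, m k l := by
  have hrow (f : ℕ → ℕ) : ∑ k ∈ Ioc 0 i, f k = ∑ k ∈ Ioc 0 i', f k + ∑ k ∈ Ioc i' i, f k :=
    (sum_Ioc_consecutive f (Nat.zero_le _) hi).symm
  have hcol (f : ℕ → ℕ) : ∑ l ∈ Ioc 0 j, f l = ∑ l ∈ Ioc 0 j', f l + ∑ l ∈ Ioc j' j, f l :=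
    (sum_Ioc_consecutive f (Nat.zero_le _) hj).symm
  simp only [rk_eq_sum_Ioc, hrow, hcol, sum_add_distrib]
  ring

lemma rk_add (m' : ℕ → ℕ → ℕ) (i j : ℕ) :
    rk (fun x y => m x y + m' x y) i j = rk m i j + rk m' i j := by
  simp only [rk, sum_add_distrib]

lemma rk_single (a b i j : ℕ) :
    rk (fun x y => if x = a ∧ y = b then 1 else 0) i j =
      if 1 ≤ a ∧ a ≤ i ∧ 1 ≤ b ∧ b ≤ j then 1 else 0 := by
  simp only [rk, ite_and]
  split_ifs <;> simp_all

end RankNumbers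

section Moves

variable {m : ℕ → ℕ → ℕ} {i0 j0 i1 j1 : ℕ}

lemma moveMat_add_corners (hi : i0 ≠ i1) (hj : j0 ≠ j1) (h0 : 0 < m i0 j0) (h1 : 0 < m i1 j1)
    (x y : ℕ) :
    moveMat m i0 j0 i1 j1 x y +
        ((if x = i0 ∧ y = j0 then 1 else 0) + (if x = i1 ∧ y = j1 then 1 else 0)) =
      m x y + ((if x = i0 ∧ y = j1 then 1 else 0) + (if x = i1 ∧ y = j0 then 1 else 0)) := by
  unfold moveMat
  simp only [Prod.mk.injEq]
  split_ifs <;> grind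

lemma rk_moveMat (hi0 : 1 ≤ i0) (hj0 : 1 ≤ j0) (hi : i0 < i1) (hj : j0 < j1)
    (h0 : 0 < m i0 j0) (h1 : 0 < m i1 j1) (i j : ℕ) :
    rk (moveMat m i0 j0 i1 j1) i j + (if i0 ≤ i ∧ i < i1 ∧ j0 ≤ j ∧ j < j1 then 1 else 0) =
      rk m i j := by
  have h := congrArg (fun f => rk f i j) (funext₂ (moveMat_add_corners hi.ne hj.ne h0 h1))
  simp only [rk_add, rk_single] at h
  split_ifs at h ⊢ <;> omega

lemma rk_moveMat_le (hi0 : 1 ≤ i0) (hj0 : 1 ≤ j0) (hi : i0 < i1) (hj : j0 < j1)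
    (h0 : 0 < m i0 j0) (h1 : 0 < m i1 j1) (i j : ℕ) :
    rk (moveMat m i0 j0 i1 j1) i j ≤ rk m i j :=
  (Nat.le_add_right _ _).trans (rk_moveMat hi0 hj0 hi hj h0 h1 i j).le

end Moves

lemma RkLE.trans {q r : ℕ} {m₁ m₂ m₃ : ℕ → ℕ → ℕ} (h₁₂ : RkLE q r m₁ m₂)
    (h₂₃ : RkLE q r m₂ m₃) : RkLE q r m₁ m₃ :=
  fun i hi j hj => (h₂₃ i hi j hj).trans (h₁₂ i hi j hj)

lemma MoveRel.rkLE {q r : ℕ} {m m' : ℕ → ℕ → ℕ} (h : MoveRel q r m m') : RkLE q r m m' := by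
  obtain ⟨i0, j0, i1, j1, hi0, -, hj0, -, hi, hj, h0, h1, -, rfl⟩ := h
  exact fun i _ j _ => rk_moveMat_le hi0 hj0 hi hj h0 h1 i j

lemma rkLE_of_moveLE {q r : ℕ} {m m' : ℕ → ℕ → ℕ} (h : MoveLE q r m m') : RkLE q r m m' := by
  induction h with
  | refl => exact fun i _ j _ => le_rfl
  | tail _ hmove ih => exact ih.trans hmove.rkLE

section Transport

variable {q r : ℕ} {b c : ℕ → ℕ} {m m' : ℕ → ℕ → ℕ}

lemma sum_row_eq_of_rk_eq {f g : ℕ → ℕ → ℕ} (h : ∀ i, rk f i r = rk g i r) (i : ℕ) :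
    ∑ l ∈ Icc 1 r, f (i + 1) l = ∑ l ∈ Icc 1 r, g (i + 1) l := by
  have := rk_succ_left f i r
  have := rk_succ_left g i r
  have := h i
  have := h (i + 1)
  omega

lemma sum_col_eq_of_rk_eq {f g : ℕ → ℕ → ℕ} (h : ∀ j, rk f q j = rk g q j) (j : ℕ) :
    ∑ k ∈ Icc 1 q, f k (j + 1) = ∑ k ∈ Icc 1 q, g k (j + 1) := by
  have := rk_succ_right f q j
  have := rk_succ_right g q j
  have := h j
  have := h (j + 1)
  omega

lemma IsTransport.sum_row_eq (hm : IsTransport q r b c m) (hm' : IsTransport q r b c m')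
    (i : ℕ) : ∑ l ∈ Icc 1 r, m i l = ∑ l ∈ Icc 1 r, m' i l := by
  by_cases hi : i ∈ Icc 1 q
  · rw [hm.2.1 i hi, hm'.2.1 i hi]
  · simp [hm.1 i _ (Or.inl hi), hm'.1 i _ (Or.inl hi)]

lemma IsTransport.sum_col_eq (hm : IsTransport q r b c m) (hm' : IsTransport q r b c m')
    (j : ℕ) : ∑ k ∈ Icc 1 q, m k j = ∑ k ∈ Icc 1 q, m' k j := by
  by_cases hj : j ∈ Icc 1 r
  · rw [hm.2.2 j hj, hm'.2.2 j hj]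
  · simp [hm.1 _ j (Or.inr hj), hm'.1 _ j (Or.inr hj)]

lemma IsTransport.rk_right_eq (hm : IsTransport q r b c m) (hm' : IsTransport q r b c m')
    (i : ℕ) : rk m i r = rk m' i r :=
  sum_congr rfl fun k _ => hm.sum_row_eq hm' k

lemma IsTransport.rk_bottom_eq (hm : IsTransport q r b c m) (hm' : IsTransport q r b c m')
    (j : ℕ) : rk m q j = rk m' q j := by
  simp only [rk]
  rw [sum_comm, sum_comm (f := fun k l => m' k l)]
  exact sum_congr rfl fun l _ => hm.sum_col_eq hm' l

lemma isTransport_moveMat {i0 j0 i1 j1 : ℕ} (hm : IsTransport q r b c m) (hi0 : 1 ≤ i0)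
    (hj0 : 1 ≤ j0) (hi : i0 < i1) (hj : j0 < j1) (hi1 : i1 ≤ q) (hj1 : j1 ≤ r)
    (h0 : 0 < m i0 j0) (h1 : 0 < m i1 j1) :
    IsTransport q r b c (moveMat m i0 j0 i1 j1) := by
  have hrk (i j : ℕ) (hij : q ≤ i ∨ r ≤ j) : rk (moveMat m i0 j0 i1 j1) i j = rk m i j := by
    have := rk_moveMat hi0 hj0 hi hj h0 h1 i j
    rwa [if_neg (by omega), add_zero] at this
  refine ⟨fun i j hij => ?_, fun i hi => ?_, fun j hj => ?_⟩
  · have hcorners := hij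
    simp only [mem_Icc] at hcorners
    simp only [moveMat, Prod.mk.injEq]
    rw [if_neg (by omega), if_neg (by omega), hm.1 i j hij]
  · obtain ⟨k, rfl⟩ : ∃ k, i = k + 1 := ⟨i - 1, by simp only [mem_Icc] at hi; omega⟩
    rw [sum_row_eq_of_rk_eq (fun i => hrk i r (Or.inr le_rfl)), hm.2.1 _ hi]
  · obtain ⟨k, rfl⟩ : ∃ k, j = k + 1 := ⟨j - 1, by simp only [mem_Icc] at hj; omega⟩
    rw [sum_col_eq_of_rk_eq (fun j => hrk q j (Or.inl le_rfl)), hm.2.2 _ hj]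

lemma IsTransport.eq_of_rk_eq (hm : IsTransport q r b c m) (hm' : IsTransport q r b c m')
    (h : ∀ i ≤ q, ∀ j ≤ r, rk m i j = rk m' i j) : m = m' := by
  funext i j
  by_cases hij : i ∈ Icc 1 q ∧ j ∈ Icc 1 r
  · simp only [mem_Icc] at hij
    obtain ⟨k, rfl⟩ : ∃ k, i = k + 1 := ⟨i - 1, by omega⟩
    obtain ⟨l, rfl⟩ : ∃ l, j = l + 1 := ⟨j - 1, by omega⟩
    have := rk_succ_succ m k l
    have := rk_succ_succ m' k l
    have := h (k + 1) (by omega) (l + 1) (by omega)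
    have := h k (by omega) l (by omega)
    have := h (k + 1) (by omega) l (by omega)
    have := h k (by omega) (l + 1) (by omega)
    omega
  · rw [not_and_or] at hij
    rw [hm.1 i j hij, hm'.1 i j hij]

end Transport

section Slack

variable {q r : ℕ} {b c : ℕ → ℕ} {m m' : ℕ → ℕ → ℕ}

/-- `r(m') < r(m)` on the half-open box `[i0,i1) × [j0,j1)`: exactly the rank numbers that the
move at `[i0,i1] × [j0,j1]` lowers. -/
def SlackOn (m m' : ℕ → ℕ → ℕ) (i0 j0 i1 j1 : ℕ) : Prop :=
  ∀ i j, i0 ≤ i → i < i1 → j0 ≤ j → j < j1 → rk m' i j < rk m i j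

structure IsSlackRect (m m' : ℕ → ℕ → ℕ) (i0 j0 i1 j1 : ℕ) : Prop where
  row_lt : i0 < i1
  col_lt : j0 < j1
  pos_top : 0 < m i0 j0
  pos_bottom : 0 < m i1 j1
  slackOn : SlackOn m m' i0 j0 i1 j1

lemma SlackOn.mono {i0 j0 i1 j1 i0' j0' i1' j1' : ℕ} (h : SlackOn m m' i0 j0 i1 j1)
    (hi0 : i0 ≤ i0') (hj0 : j0 ≤ j0') (hi1 : i1' ≤ i1) (hj1 : j1' ≤ j1) :
    SlackOn m m' i0' j0' i1' j1' :=
  fun i j h₁ h₂ h₃ h₄ => h i j (hi0.trans h₁) (h₂.trans_le hi1) (hj0.trans h₃) (h₄.trans_le hj1)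

lemma SlackOn.exists_rk_eq_of_not_succ_left {i0 j0 i j : ℕ} (hle : RkLE q r m m')
    (hiq : i ≤ q) (hjr : j ≤ r) (h : SlackOn m m' i0 j0 i j)
    (hsucc : ¬ SlackOn m m' i0 j0 (i + 1) j) : ∃ l, j0 ≤ l ∧ l < j ∧ rk m i l = rk m' i l := by
  simp only [SlackOn, not_forall, not_lt] at hsucc
  obtain ⟨k, l, hk0, hki, hl0, hlj, hkl⟩ := hsucc
  obtain rfl : k = i := by
    by_contra hne
    exact (h k l hk0 (by omega) hl0 hlj).not_ge hkl
  exact ⟨l, hl0, hlj, le_antisymm hkl (hle k hiq l (by omega))⟩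

lemma SlackOn.exists_rk_eq_of_not_succ_right {i0 j0 i j : ℕ} (hle : RkLE q r m m')
    (hiq : i ≤ q) (hjr : j ≤ r) (h : SlackOn m m' i0 j0 i j)
    (hsucc : ¬ SlackOn m m' i0 j0 i (j + 1)) : ∃ k, i0 ≤ k ∧ k < i ∧ rk m k j = rk m' k j := by
  simp only [SlackOn, not_forall, not_lt] at hsucc
  obtain ⟨k, l, hk0, hki, hl0, hlj, hkl⟩ := hsucc
  obtain rfl : l = j := by
    by_contra hne
    exact (h k l hk0 hki hl0 (by omega)).not_ge hkl
  exact ⟨k, hk0, hki, le_antisymm hkl (hle k (by omega) l hjr)⟩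

lemma exists_pos_of_rk_add_lt {i' i j' j : ℕ} (hi : i' ≤ i) (hj : j' ≤ j)
    (hrow : rk m i' j = rk m' i' j) (hcol : rk m i j' = rk m' i j')
    (hlt : rk m' i j + rk m' i' j' < rk m i j + rk m i' j') :
    ∃ k l, i' < k ∧ k ≤ i ∧ j' < l ∧ l ≤ j ∧ 0 < m k l := by
  have := rk_add_rk_eq m hi hj
  have := rk_add_rk_eq m' hi hj
  have hpos : ∑ k ∈ Ioc i' i, ∑ l ∈ Ioc j' j, m k l ≠ 0 := by omega
  obtain ⟨k, hk, hk0⟩ := exists_ne_zero_of_sum_ne_zero hpos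
  obtain ⟨l, hl, hl0⟩ := exists_ne_zero_of_sum_ne_zero hk0
  simp only [mem_Ioc] at hk hl
  exact ⟨k, l, hk.1, hk.2, hl.1, hl.2, Nat.pos_of_ne_zero hl0⟩

/-- Beyond a maximal slack box `[i0,i) × [j0,j)` there are rank equalities at some `(i, j')` and
`(i', j)` (the boundary of the matrix, or what blocks extending the box); with the slack at
`(i', j')`, the rectangle identity forces a positive entry in `(i',i] × (j',j]`. -/
lemma exists_slackOn_pos {i0 j0 : ℕ} (hle : RkLE q r m m')
    (hq : ∀ j, rk m q j = rk m' q j) (hr : ∀ i, rk m i r = rk m' i r)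
    (hi0 : i0 < q) (hj0 : j0 < r) (hslack : rk m' i0 j0 < rk m i0 j0) :
    ∃ i1 j1, i0 < i1 ∧ i1 ≤ q ∧ j0 < j1 ∧ j1 ≤ r ∧ 0 < m i1 j1 ∧ SlackOn m m' i0 j0 i1 j1 := by
  classical
  let boxes := (Icc (i0 + 1) q ×ˢ Icc (j0 + 1) r).filter fun p => SlackOn m m' i0 j0 p.1 p.2
  have mem_boxes (i j : ℕ) : (i, j) ∈ boxes ↔
      (i0 < i ∧ i ≤ q ∧ j0 < j ∧ j ≤ r) ∧ SlackOn m m' i0 j0 i j := by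
    simp only [boxes, mem_filter, mem_product, mem_Icc, Order.add_one_le_iff, and_assoc]
  have hunit : (i0 + 1, j0 + 1) ∈ boxes := (mem_boxes _ _).2 ⟨by omega, fun i j _ _ _ _ => by
    obtain rfl : i = i0 := by omega
    obtain rfl : j = j0 := by omega
    exact hslack⟩
  obtain ⟨⟨i, j⟩, hij, hmax⟩ := boxes.exists_max_image (fun p => p.1 + p.2) ⟨_, hunit⟩
  obtain ⟨⟨hi, hiq, hj, hjr⟩, hbox⟩ := (mem_boxes i j).1 hij
  obtain ⟨j', hj0', hj', hrow⟩ : ∃ j', j0 ≤ j' ∧ j' < j ∧ rk m i j' = rk m' i j' := by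
    rcases hiq.lt_or_eq with hiq | rfl
    · refine hbox.exists_rk_eq_of_not_succ_left hle hiq.le hjr fun hsucc => ?_
      have := hmax _ ((mem_boxes (i + 1) j).2 ⟨by omega, hsucc⟩)
      omega
    · exact ⟨j0, le_rfl, hj, hq j0⟩
  obtain ⟨i', hi0', hi', hcol⟩ : ∃ i', i0 ≤ i' ∧ i' < i ∧ rk m i' j = rk m' i' j := by
    rcases hjr.lt_or_eq with hjr | rfl
    · refine hbox.exists_rk_eq_of_not_succ_right hle hiq hjr.le fun hsucc => ?_
      have := hmax _ ((mem_boxes i (j + 1)).2 ⟨by omega, hsucc⟩)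
      omega
    · exact ⟨i0, le_rfl, hi, hr i0⟩
  have hlt : rk m' i j + rk m' i' j' < rk m i j + rk m i' j' :=
    Nat.add_lt_add_of_le_of_lt (hle i hiq j hjr) (hbox i' j' hi0' hi' hj0' hj')
  obtain ⟨k, l, hik, hki, hjl, hlj, hkl⟩ := exists_pos_of_rk_add_lt hi'.le hj'.le hcol hrow hlt
  exact ⟨k, l, by omega, by omega, by omega, by omega, hkl, hbox.mono le_rfl le_rfl hki hlj⟩

/-- Start from the lexicographically first slack position `(i0, j0)`: the rank numbers just above
and just left of it agree, which makes `m i0 j0` positive. -/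
lemma exists_slackRect (hm : IsTransport q r b c m) (hm' : IsTransport q r b c m')
    (hle : RkLE q r m m') (hne : ∃ i ≤ q, ∃ j ≤ r, rk m' i j < rk m i j) :
    ∃ i0 j0 i1 j1, 1 ≤ i0 ∧ i1 ≤ q ∧ 1 ≤ j0 ∧ j1 ≤ r ∧ IsSlackRect m m' i0 j0 i1 j1 := by
  classical
  let i0 := Nat.find hne
  obtain ⟨hi0q, hrow⟩ : i0 ≤ q ∧ ∃ j ≤ r, rk m' i0 j < rk m i0 j := Nat.find_spec hne
  let j0 := Nat.find hrow
  obtain ⟨hj0r, hslack⟩ : j0 ≤ r ∧ rk m' i0 j0 < rk m i0 j0 := Nat.find_spec hrow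
  have hi0 : 1 ≤ i0 := Nat.one_le_iff_ne_zero.2 fun h => by simp [h] at hslack
  have hj0 : 1 ≤ j0 := Nat.one_le_iff_ne_zero.2 fun h => by simp [h] at hslack
  have hi0q : i0 < q := hi0q.lt_of_ne fun h => by simp [h, hm.rk_bottom_eq hm'] at hslack
  have hj0r : j0 < r := hj0r.lt_of_ne fun h => by simp [h, hm.rk_right_eq hm'] at hslack
  have habove (j : ℕ) (hj : j ≤ r) : rk m (i0 - 1) j = rk m' (i0 - 1) j := by
    refine le_antisymm (not_lt.1 fun h => ?_) (hle _ (by omega) j hj)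
    have := Nat.find_min' hne ⟨by omega, j, hj, h⟩
    omega
  have hleft : rk m i0 (j0 - 1) = rk m' i0 (j0 - 1) := by
    refine le_antisymm (not_lt.1 fun h => ?_) (hle _ hi0q.le _ (by omega))
    have := Nat.find_min' hrow ⟨by omega, h⟩
    omega
  have hpos : 0 < m i0 j0 := by
    obtain ⟨k, l, hk, hk', hl, hl', hkl⟩ :=
      exists_pos_of_rk_add_lt (Nat.sub_le i0 1) (Nat.sub_le j0 1) (habove j0 hj0r.le) hleft
      (Nat.add_lt_add_of_lt_of_le hslack (hle _ (by omega) _ (by omega)))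
    obtain rfl : k = i0 := by omega
    obtain rfl : l = j0 := by omega
    exact hkl
  obtain ⟨i1, j1, hi, hi1, hj, hj1, h1, hbox⟩ := exists_slackOn_pos hle (hm.rk_bottom_eq hm')
    (hm.rk_right_eq hm') hi0q hj0r hslack
  exact ⟨i0, j0, i1, j1, hi0, hi1, hj0, hj1, hi, hj, hpos, h1, hbox⟩

end Slack

section Shrinking

variable {q r : ℕ} {m m' : ℕ → ℕ → ℕ} {i0 j0 i1 j1 : ℕ}

/-- A nonzero entry `(u, v)` of the rectangle other than its corners cuts off a smaller slack
rectangle: `[i0,u] × [j0,v]` if `i0 < u` and `j0 < v`, else `[i0,i1] × [v,j1]` or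
`[u,i1] × [j0,j1]`. -/
lemma IsSlackRect.exists_isSimpleMoveAt (h : IsSlackRect m m' i0 j0 i1 j1) (hi0 : 1 ≤ i0)
    (hi1 : i1 ≤ q) (hj0 : 1 ≤ j0) (hj1 : j1 ≤ r) :
    ∃ i0' j0' i1' j1', 1 ≤ i0' ∧ i1' ≤ q ∧ 1 ≤ j0' ∧ j1' ≤ r ∧ IsSlackRect m m' i0' j0' i1' j1' ∧
      IsSimpleMoveAt m (moveMat m i0' j0' i1' j1') i0' j0' i1' j1' := by
  induction hN : i1 - i0 + (j1 - j0) using Nat.strong_induction_on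
    generalizing i0 j0 i1 j1 with
  | _ N ih =>
  obtain ⟨hi, hj, h0, h1, hslack⟩ := h
  by_cases hempty : ∀ i j, i0 ≤ i → i ≤ i1 → j0 ≤ j → j ≤ j1 → (i, j) ≠ (i0, j0) →
      (i, j) ≠ (i1, j1) → (i, j) ≠ (i0, j1) → (i, j) ≠ (i1, j0) → m i j = 0
  · exact ⟨i0, j0, i1, j1, hi0, hi1, hj0, hj1, ⟨hi, hj, h0, h1, hslack⟩,
      hi, hj, h0, h1, hempty, rfl⟩
  push Not at hempty
  obtain ⟨u, v, hu0, hu1, hv0, hv1, h00, h11, h01, h10, huv⟩ := hempty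
  simp only [ne_eq, Prod.mk.injEq] at h00 h11 h01 h10
  replace huv := Nat.pos_of_ne_zero huv
  rcases (show (i0 < u ∧ j0 < v) ∨ u = i0 ∨ v = j0 by omega) with ⟨hu, hv⟩ | rfl | rfl
  · exact ih _ (by omega) ⟨hu, hv, h0, huv, hslack.mono le_rfl le_rfl hu1 hv1⟩
      hi0 (hu1.trans hi1) hj0 (hv1.trans hj1) rfl
  · exact ih _ (by omega) ⟨hi, by omega, huv, h1, hslack.mono le_rfl hv0 le_rfl le_rfl⟩
      hi0 hi1 (hj0.trans hv0) hj1 rfl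
  · exact ih _ (by omega) ⟨by omega, hj, huv, h1, hslack.mono hu0 le_rfl le_rfl le_rfl⟩
      (hi0.trans hu0) hi1 hj0 hj1 rfl

lemma IsSlackRect.rkLE_moveMat (h : IsSlackRect m m' i0 j0 i1 j1) (hi0 : 1 ≤ i0) (hj0 : 1 ≤ j0)
    (hle : RkLE q r m m') : RkLE q r (moveMat m i0 j0 i1 j1) m' := fun i hi j hj => by
  have := rk_moveMat hi0 hj0 h.row_lt h.col_lt h.pos_top h.pos_bottom i j
  split_ifs at this with hbox
  · have := h.slackOn i j hbox.1 hbox.2.1 hbox.2.2.1 hbox.2.2.2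
    omega
  · have := hle i hi j hj
    omega

end Shrinking

def rkSum (q r : ℕ) (m : ℕ → ℕ → ℕ) : ℕ :=
  ∑ p ∈ range (q + 1) ×ˢ range (r + 1), rk m p.1 p.2

lemma rkSum_moveMat_lt {q r : ℕ} {m : ℕ → ℕ → ℕ} {i0 j0 i1 j1 : ℕ} (hi0 : 1 ≤ i0)
    (hi1 : i1 ≤ q) (hj0 : 1 ≤ j0) (hj1 : j1 ≤ r) (hi : i0 < i1) (hj : j0 < j1)
    (h0 : 0 < m i0 j0) (h1 : 0 < m i1 j1) :
    rkSum q r (moveMat m i0 j0 i1 j1) < rkSum q r m := by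
  refine sum_lt_sum (fun p _ => rk_moveMat_le hi0 hj0 hi hj h0 h1 p.1 p.2)
    ⟨(i0, j0), by simp only [mem_product, mem_range]; omega, ?_⟩
  have := rk_moveMat hi0 hj0 hi hj h0 h1 i0 j0
  rw [if_pos (by omega)] at this
  dsimp only
  omega

lemma moveLE_of_rkLE {q r : ℕ} {b c : ℕ → ℕ} {m m' : ℕ → ℕ → ℕ}
    (hm : IsTransport q r b c m) (hm' : IsTransport q r b c m') (hle : RkLE q r m m') :
    MoveLE q r m m' := by
  induction hN : rkSum q r m using Nat.strong_induction_on generalizing m with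
  | _ N ih =>
  by_cases heq : ∀ i ≤ q, ∀ j ≤ r, rk m i j = rk m' i j
  · exact hm.eq_of_rk_eq hm' heq ▸ .refl
  push Not at heq
  obtain ⟨i, hi, j, hj, hne⟩ := heq
  obtain ⟨i0, j0, i1, j1, hi0, hi1, hj0, hj1, hrect⟩ :=
    exists_slackRect hm hm' hle ⟨i, hi, j, hj, (hle i hi j hj).lt_of_ne hne.symm⟩
  obtain ⟨i0, j0, i1, j1, hi0, hi1, hj0, hj1, hrect, hmove⟩ :=
    hrect.exists_isSimpleMoveAt hi0 hi1 hj0 hj1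
  obtain ⟨hi, hj, h0, h1, -⟩ := id hrect
  refine .head ⟨i0, j0, i1, j1, hi0, hi1, hj0, hj1, hmove⟩ (ih _ ?_ ?_ ?_ rfl)
  · exact hN ▸ rkSum_moveMat_lt hi0 hi1 hj0 hj1 hi hj h0 h1
  · exact isTransport_moveMat hm hi0 hj0 hi hj hi1 hj1 h0 h1
  · exact hrect.rkLE_moveMat hi0 hj0 hle

theorem rkLE_iff_moveLE_general (q r : ℕ) (b c : ℕ → ℕ) (m m' : ℕ → ℕ → ℕ)
    (hm : IsTransport q r b c m) (hm' : IsTransport q r b c m') :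
    RkLE q r m m' ↔ MoveLE q r m m' :=
  ⟨moveLE_of_rkLE hm hm', rkLE_of_moveLE⟩

/-- for transport matrices, the rank order and the move order coincide. -/
theorem rkLE_iff_moveLE (n q r : ℕ) (hn : 0 < n) (hq : 0 < q) (hr : 0 < r)
    (b c : ℕ → ℕ) (hb : IsComposition n q b) (hc : IsComposition n r c)
    (m m' : ℕ → ℕ → ℕ) (hm : IsTransport q r b c m) (hm' : IsTransport q r b c m') :
    RkLE q r m m' ↔ MoveLE q r m m' :=
  rkLE_iff_moveLE_general q r b c m m' hm hm'

end TwoFlagsLine
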